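/- arXiv:2006.04293 — 4 statements merged into one kernel-verified Lean document; each statement's English description precedes it below -/
import Mathlib

section
/- Fix an integer K ≥ 1, reals ρ₁ > 1, D > 0, κ₁ > 0, and a function c₀ : (0, ρ₁) → (0, 1]. Let φ₁, φ₂ : (−ρ₁, ρ₁) → ℝ be continuous with sup_{(−ρ₁,ρ₁)} |φ_i| ≤ D for i = 1, 2, and assume: (i) for each i ∈ {1,2}, every c ∈ ℝ, every real polynomial P of degree ≤ K, every ρ ∈ (0, ρ₁) and every s₀ with (s₀ − ρ, s₀ + ρ) ⊆ (−ρ₁, ρ₁), one has sup_{|s−s₀|<ρ} |c φ_i(s) + P(s)| ≥ c₀(ρ) · sup_{|s|<ρ₁} |c φ_i(s) + P(s)|; (ii) for each i ∈ {1,2} and every real polynomial P of degree ≤ K, sup_{s∈J} |φ_i(s) + P(s)| > κ₁ both for J = [0,1) and for J = (−1,0]. Then for every ρ ∈ (0, ρ₁) there exists κ > 0 such that for every (z₀, y₀) ∈ (−ρ₁+ρ, ρ₁−ρ)², all h₁, h₂ ∈ ℝ, and every real polynomial P(z,y) of degree at most K in z and at most K in y satisfying P(z,0) = 0 and P(0,y)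 = 0 for all z, y, the function R(z,y) = h₁ y φ₁(z) + h₂ z φ₂(y) + P(z,y) satisfies Osc_{B(z₀,ρ)×B(y₀,ρ)} R ≥ κ · sup_{(z,y)∈(−ρ₁,ρ₁)²} |R(z,y)|. -/
/-!
Let `Δ` be the double difference of `R` based at `(z₀, y₀)`. On the small box `|Δ| ≤ 2 ω`,
where `ω` is the oscillation there. For fixed `z` the function `y ↦ Δ(z, y)` is a multiple of `φ₁`
plus a polynomial of degree `≤ K` (and symmetrically in `z`), so the localization hypothesis,
applied first in `y` and then in `z`, gives `|Δ| ≤ 2 ω / c₀(ρ)²` on the whole square.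
As `P` vanishes on the axes, `R` is linear on them, hence within four double differences of a
linear function `b z + d y`; the oscillation of that linear function on the small box bounds
`|b| + |d|`, and with it `R` on the whole square.
-/

open Set Polynomial Bornology

namespace MvPolynomial

variable {R : Type*} [CommSemiring R]

noncomputable def sliceFst (P : MvPolynomial (Fin 2) R) (t : R) : R[X] :=
  (finSuccEquiv R 1 P).map (eval fun _ => t)

theorem eval_sliceFst (P : MvPolynomial (Fin 2) R) (t s : R) :
    (sliceFst P t).eval s = eval ![s, t] P := by
  have h : (![s, t] : Fin 2 → R) = Fin.cons s fun _ => t := by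
    funext i; fin_cases i <;> rfl
  rw [h, eval_eq_eval_mv_eval']
  rfl

theorem natDegree_sliceFst_le (P : MvPolynomial (Fin 2) R) (t : R) :
    (sliceFst P t).natDegree ≤ degreeOf 0 P :=
  natDegree_map_le.trans (natDegree_finSuccEquiv P).le

noncomputable def sliceSnd (P : MvPolynomial (Fin 2) R) (t : R) : R[X] :=
  sliceFst (rename (Equiv.swap 0 1) P) t

theorem eval_sliceSnd (P : MvPolynomial (Fin 2) R) (t s : R) :
    (sliceSnd P t).eval s = eval ![t, s] P := by
  rw [sliceSnd, eval_sliceFst, eval_rename]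
  congr 2
  funext i; fin_cases i <;> simp

theorem natDegree_sliceSnd_le (P : MvPolynomial (Fin 2) R) (t : R) :
    (sliceSnd P t).natDegree ≤ degreeOf 1 P := by
  refine (natDegree_sliceFst_le _ t).trans_eq ?_
  simpa using degreeOf_rename_of_injective (p := P) (Equiv.swap (0 : Fin 2) 1).injective 1

end MvPolynomial

section Template

variable {R : Type*} [CommSemiring R]

def templateSpace (φ : R → R) (K : ℕ) : Submodule R (R → R) where
  carrier := {f | ∃ a : R, ∃ Q : R[X], Q.natDegree ≤ K ∧ f = fun s => a * φ s + Q.eval s}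
  add_mem' := by
    rintro _ _ ⟨a, Q, hQ, rfl⟩ ⟨a', Q', hQ', rfl⟩
    refine ⟨a + a', Q + Q', (natDegree_add_le _ _).trans (max_le hQ hQ'), ?_⟩
    funext s
    simp only [Pi.add_apply, eval_add]
    ring
  zero_mem' := ⟨0, 0, by simp, by funext; simp⟩
  smul_mem' := by
    rintro b _ ⟨a, Q, hQ, rfl⟩
    refine ⟨b * a, b • Q, (natDegree_smul_le _ _).trans hQ, ?_⟩
    funext s
    simp only [Pi.smul_apply, smul_eq_mul, eval_smul]
    ring

theorem const_mem_templateSpace {φ : R → R} {K : ℕ} (r : R) : (fun _ => r) ∈ templateSpace φ K :=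
  ⟨0, C r, by simp, by funext; simp⟩

end Template

/-- The form of `c * sup_S |f| ≤ sup_W |f|` that is immune to the junk values of `sSup`. -/
def SupControl {α : Type*} (c : ℝ) (W S : Set α) (f : α → ℝ) : Prop :=
  ∀ m, (∀ x ∈ W, |f x| ≤ m) → ∀ x ∈ S, c * |f x| ≤ m

namespace SupControl

variable {α β : Type*} {c : ℝ}

theorem of_mul_csSup_le {W S : Set α} {f : α → ℝ} (hc : 0 ≤ c) (hS : BddAbove ((|f ·|) '' S))
    (hW : W.Nonempty) (h : c * sSup ((|f ·|) '' S) ≤ sSup ((|f ·|) '' W)) :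
    SupControl c W S f := fun m hm x hx =>
  calc c * |f x| ≤ c * sSup ((|f ·|) '' S) :=
        mul_le_mul_of_nonneg_left (le_csSup hS (mem_image_of_mem _ hx)) hc
    _ ≤ sSup ((|f ·|) '' W) := h
    _ ≤ m := csSup_le (hW.image _) (forall_mem_image.2 hm)

theorem mul_sq_abs_le {W₁ S₁ : Set α} {W₂ S₂ : Set β} {g : α → β → ℝ} {M : ℝ} (hc : 0 < c)
    (hW : ∀ x ∈ W₁, ∀ y ∈ W₂, |g x y| ≤ M) (h₂ : ∀ x ∈ W₁, SupControl c W₂ S₂ (g x))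
    (h₁ : ∀ y ∈ S₂, SupControl c W₁ S₁ fun x => g x y) {x y} (hx : x ∈ S₁) (hy : y ∈ S₂) :
    c ^ 2 * |g x y| ≤ M := by
  have hW₁ : ∀ x' ∈ W₁, |g x' y| ≤ M / c := fun x' hx' =>
    (le_div_iff₀' hc).2 (h₂ x' hx' M (hW x' hx') y hy)
  have := (le_div_iff₀' hc).1 (h₁ y hy (M / c) hW₁ x hx)
  rwa [sq, mul_assoc]

end SupControl

theorem bddAbove_abs_mul_add_eval {φ : ℝ → ℝ} {S : Set ℝ} {D : ℝ} (hS : IsBounded S)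
    (hφ : ∀ s ∈ S, |φ s| ≤ D) (a : ℝ) (Q : ℝ[X]) :
    BddAbove ((fun s => |a * φ s + Q.eval s|) '' S) := by
  obtain ⟨B, hB⟩ := hS.isCompact_closure.exists_bound_of_continuousOn Q.continuous.continuousOn
  refine ⟨|a| * D + B, forall_mem_image.2 fun s hs => ?_⟩
  calc |a * φ s + Q.eval s| ≤ |a| * |φ s| + ‖Q.eval s‖ := by
        rw [← abs_mul, Real.norm_eq_abs]; exact abs_add_le _ _
    _ ≤ |a| * D + B := by gcongr; exacts [hφ s hs, hB s (subset_closure hs)]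

theorem templateSpace.supControl {φ : ℝ → ℝ} {K : ℕ} {S W : Set ℝ} {c D : ℝ} (hc : 0 ≤ c)
    (hS : IsBounded S) (hφ : ∀ s ∈ S, |φ s| ≤ D) (hW : W.Nonempty)
    (hloc : ∀ a : ℝ, ∀ Q : ℝ[X], Q.natDegree ≤ K →
      c * sSup ((fun s => |a * φ s + Q.eval s|) '' S)
        ≤ sSup ((fun s => |a * φ s + Q.eval s|) '' W))
    {f : ℝ → ℝ} (hf : f ∈ templateSpace φ K) : SupControl c W S f := by
  obtain ⟨a, Q, hQ, rfl⟩ := hf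
  exact .of_mul_csSup_le hc (bddAbove_abs_mul_add_eval hS hφ a Q) hW (hloc a Q hQ)

theorem sub_le_csSup_image_sub_csInf_image {α : Type*} {f : α → ℝ} {s : Set α}
    (hf : IsBounded (f '' s)) {x y : α} (hx : x ∈ s) (hy : y ∈ s) :
    f x - f y ≤ sSup (f '' s) - sInf (f '' s) :=
  sub_le_sub (le_csSup hf.bddAbove (mem_image_of_mem f hx))
    (csInf_le hf.bddBelow (mem_image_of_mem f hy))

section DoubleDifference

variable {α β G : Type*} [AddCommGroup G]

def doubleDiff (R : α × β → G) (a : α) (b : β) (x : α) (y : β) : G :=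
  R (x, y) - R (a, y) - R (x, b) + R (a, b)

theorem doubleDiff_rebase (R : α × β → G) (a a' : α) (b b' : β) (x : α) (y : β) :
    doubleDiff R a' b' x y = doubleDiff R a b x y - doubleDiff R a b a' y
      - doubleDiff R a b x b' + doubleDiff R a b a' b' := by
  simp only [doubleDiff]; abel

theorem doubleDiff_mem_right {T : AddSubgroup (β → G)}
    {R : α × β → G} (hR : ∀ x, (fun y => R (x, y)) ∈ T) (hT : ∀ g : G, (fun _ => g) ∈ T)
    (a : α) (b : β) (x : α) : doubleDiff R a b x ∈ T :=
  T.add_mem (T.sub_mem (T.sub_mem (hR x) (hR a)) (hT _)) (hT _)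

theorem doubleDiff_mem_left {T : AddSubgroup (α → G)}
    {R : α × β → G} (hR : ∀ y, (fun x => R (x, y)) ∈ T) (hT : ∀ g : G, (fun _ => g) ∈ T)
    (a : α) (b : β) (y : β) : (fun x => doubleDiff R a b x y) ∈ T :=
  T.add_mem (T.sub_mem (T.sub_mem (hR y) (hT _)) (hR b)) (hT _)

theorem abs_doubleDiff_le {R : α × β → ℝ} {A : Set α} {B : Set β} {ω : ℝ}
    (hω : ∀ p ∈ A ×ˢ B, ∀ q ∈ A ×ˢ B, R p - R q ≤ ω) {a x : α} {b y : β} (ha : a ∈ A)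
    (hx : x ∈ A) (hb : b ∈ B) (hy : y ∈ B) : |doubleDiff R a b x y| ≤ 2 * ω := by
  have := hω (x, y) ⟨hx, hy⟩ (a, y) ⟨ha, hy⟩
  have := hω (a, y) ⟨ha, hy⟩ (x, y) ⟨hx, hy⟩
  have := hω (x, b) ⟨hx, hb⟩ (a, b) ⟨ha, hb⟩
  have := hω (a, b) ⟨ha, hb⟩ (x, b) ⟨hx, hb⟩
  rw [doubleDiff, abs_le]
  constructor <;> linarith

end DoubleDifference

theorem abs_sub_linear_le_of_abs_doubleDiff_le {R : ℝ × ℝ → ℝ} {S : Set ℝ} {a b c d M : ℝ}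
    (h0 : 0 ∈ S) (hM : ∀ x ∈ S, ∀ y ∈ S, |doubleDiff R a b x y| ≤ M)
    (hc : ∀ x, R (x, 0) = c * x) (hd : ∀ y, R (0, y) = d * y) {x y : ℝ} (hx : x ∈ S)
    (hy : y ∈ S) : |R (x, y) - (c * x + d * y)| ≤ 4 * M := by
  have hR : R (x, y) - (c * x + d * y) = doubleDiff R 0 0 x y := by
    simp only [doubleDiff, hc, hd]; ring
  rw [hR, doubleDiff_rebase R a 0 b 0]
  have h₁ := hM x hx y hy
  have h₂ := hM 0 h0 y hy
  have h₃ := hM x hx 0 h0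
  have h₄ := hM 0 h0 0 h0
  rw [abs_le] at h₁ h₂ h₃ h₄ ⊢
  constructor <;> linarith

theorem exists_abs_le_mul_eq_abs_mul (b : ℝ) {r : ℝ} (hr : 0 ≤ r) :
    ∃ t, |t| ≤ r ∧ b * t = |b| * r := by
  rcases le_total 0 b with hb | hb
  · exact ⟨r, (abs_of_nonneg hr).le, by rw [abs_of_nonneg hb]⟩
  · exact ⟨-r, by rw [abs_neg, abs_of_nonneg hr], by rw [abs_of_nonpos hb]; ring⟩

theorem mul_abs_add_abs_le_of_abs_sub_linear_le {R : ℝ × ℝ → ℝ} {x₀ y₀ ρ b d E ω : ℝ}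
    (hρ : 0 < ρ) (hE : ∀ p ∈ Ioo (x₀ - ρ) (x₀ + ρ) ×ˢ Ioo (y₀ - ρ) (y₀ + ρ),
      |R p - (b * p.1 + d * p.2)| ≤ E)
    (hω : ∀ p ∈ Ioo (x₀ - ρ) (x₀ + ρ) ×ˢ Ioo (y₀ - ρ) (y₀ + ρ),
      ∀ q ∈ Ioo (x₀ - ρ) (x₀ + ρ) ×ˢ Ioo (y₀ - ρ) (y₀ + ρ), R p - R q ≤ ω) :
    ρ * (|b| + |d|) ≤ ω + 2 * E := by
  obtain ⟨t, ht, hbt⟩ := exists_abs_le_mul_eq_abs_mul b (half_pos hρ).le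
  obtain ⟨u, hu, hdu⟩ := exists_abs_le_mul_eq_abs_mul d (half_pos hρ).le
  rw [abs_le] at ht hu
  have hp : (x₀ + t, y₀ + u) ∈ Ioo (x₀ - ρ) (x₀ + ρ) ×ˢ Ioo (y₀ - ρ) (y₀ + ρ) :=
    ⟨⟨by linarith, by linarith⟩, ⟨by linarith, by linarith⟩⟩
  have hq : (x₀ - t, y₀ - u) ∈ Ioo (x₀ - ρ) (x₀ + ρ) ×ˢ Ioo (y₀ - ρ) (y₀ + ρ) :=
    ⟨⟨by linarith, by linarith⟩, ⟨by linarith, by linarith⟩⟩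
  have hEp := (abs_le.1 (hE _ hp)).1
  have hEq := (abs_le.1 (hE _ hq)).2
  have := hω _ hp _ hq
  dsimp only at hEp hEq
  linarith

theorem isBounded_image_mul_add_mul_add_eval {φ₀ φ₁ : ℝ → ℝ} {S : Set ℝ} {D : ℝ}
    (hS : IsBounded S) (hφ₀ : ∀ s ∈ S, |φ₀ s| ≤ D) (hφ₁ : ∀ s ∈ S, |φ₁ s| ≤ D) (h₁ h₂ : ℝ)
    (P : MvPolynomial (Fin 2) ℝ) :
    IsBounded ((fun p : ℝ × ℝ => h₁ * p.2 * φ₀ p.1 + h₂ * p.1 * φ₁ p.2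
      + MvPolynomial.eval ![p.1, p.2] P) '' (S ×ˢ S)) := by
  obtain ⟨r, hr⟩ := isBounded_iff_forall_norm_le.1 hS
  have hP : Continuous fun p : ℝ × ℝ => MvPolynomial.eval ![p.1, p.2] P :=
    (MvPolynomial.continuous_eval P).comp (by fun_prop)
  obtain ⟨B, hB⟩ := (hS.prod hS).isCompact_closure.exists_bound_of_continuousOn hP.continuousOn
  refine isBounded_iff_forall_norm_le.2 ⟨|h₁| * r * D + |h₂| * r * D + B, ?_⟩
  rintro _ ⟨⟨x, y⟩, ⟨hx, hy⟩, rfl⟩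
  have hxr := hr x hx
  have hyr := hr y hy
  rw [Real.norm_eq_abs] at hxr hyr ⊢
  calc _ ≤ |h₁| * |y| * |φ₀ x| + |h₂| * |x| * |φ₁ y|
        + ‖MvPolynomial.eval ![x, y] P‖ := by
        simp only [← abs_mul, Real.norm_eq_abs]; exact abs_add_three _ _ _
    _ ≤ |h₁| * r * D + |h₂| * r * D + B := by
        have hr₀ : 0 ≤ r := (abs_nonneg x).trans hxr
        gcongr
        exacts [hφ₀ x hx, hφ₁ y hy, hB (x, y) (subset_closure ⟨hx, hy⟩)]

section Slices

variable {R : Type*} [CommSemiring R] {φ₀ φ₁ : R → R} {K : ℕ} {P : MvPolynomial (Fin 2) R}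

theorem mem_templateSpace_of_slice_snd (hK : 1 ≤ K) (hP : MvPolynomial.degreeOf 1 P ≤ K)
    (h₁ h₂ x : R) :
    (fun y => h₁ * y * φ₀ x + h₂ * x * φ₁ y + MvPolynomial.eval ![x, y] P)
      ∈ templateSpace φ₁ K := by
  refine ⟨h₂ * x, C (h₁ * φ₀ x) * X + P.sliceSnd x, ?_, ?_⟩
  · exact (natDegree_add_le _ _).trans <| max_le ((natDegree_C_mul_le _ _).trans
      (natDegree_X_le.trans hK)) ((P.natDegree_sliceSnd_le x).trans hP)
  · funext y
    simp only [eval_add, eval_mul, eval_C, eval_X, MvPolynomial.eval_sliceSnd]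
    ring

theorem mem_templateSpace_of_slice_fst (hK : 1 ≤ K) (hP : MvPolynomial.degreeOf 0 P ≤ K)
    (h₁ h₂ y : R) :
    (fun x => h₁ * y * φ₀ x + h₂ * x * φ₁ y + MvPolynomial.eval ![x, y] P)
      ∈ templateSpace φ₀ K := by
  refine ⟨h₁ * y, C (h₂ * φ₁ y) * X + P.sliceFst y, ?_, ?_⟩
  · exact (natDegree_add_le _ _).trans <| max_le ((natDegree_C_mul_le _ _).trans
      (natDegree_X_le.trans hK)) ((P.natDegree_sliceFst_le y).trans hP)
  · funext x
    simp only [eval_add, eval_mul, eval_C, eval_X, MvPolynomial.eval_sliceFst]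
    ring

end Slices

theorem abs_le_mul_of_supControl_doubleDiff {R : ℝ × ℝ → ℝ} {ρ₁ ρ c ω b d x₀ y₀ : ℝ}
    (hρ : 0 < ρ) (hc : 0 < c) (hx₀ : Ioo (x₀ - ρ) (x₀ + ρ) ⊆ Ioo (-ρ₁) ρ₁)
    (hy₀ : Ioo (y₀ - ρ) (y₀ + ρ) ⊆ Ioo (-ρ₁) ρ₁)
    (hω : ∀ p ∈ Ioo (x₀ - ρ) (x₀ + ρ) ×ˢ Ioo (y₀ - ρ) (y₀ + ρ),
      ∀ q ∈ Ioo (x₀ - ρ) (x₀ + ρ) ×ˢ Ioo (y₀ - ρ) (y₀ + ρ), R p - R q ≤ ω)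
    (hsnd : ∀ x ∈ Ioo (x₀ - ρ) (x₀ + ρ),
      SupControl c (Ioo (y₀ - ρ) (y₀ + ρ)) (Ioo (-ρ₁) ρ₁) (doubleDiff R x₀ y₀ x))
    (hfst : ∀ y ∈ Ioo (-ρ₁) ρ₁,
      SupControl c (Ioo (x₀ - ρ) (x₀ + ρ)) (Ioo (-ρ₁) ρ₁) fun x => doubleDiff R x₀ y₀ x y)
    (hb : ∀ x, R (x, 0) = b * x) (hd : ∀ y, R (0, y) = d * y) :
    ∀ p ∈ Ioo (-ρ₁) ρ₁ ×ˢ Ioo (-ρ₁) ρ₁,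
      |R p| ≤ (8 / c ^ 2 + ρ₁ / ρ * (1 + 16 / c ^ 2)) * ω := by
  have hx₀mem : x₀ ∈ Ioo (x₀ - ρ) (x₀ + ρ) := ⟨by linarith, by linarith⟩
  have hy₀mem : y₀ ∈ Ioo (y₀ - ρ) (y₀ + ρ) := ⟨by linarith, by linarith⟩
  have hρ₁ : 0 < ρ₁ := by linarith [(hx₀ hx₀mem).1, (hx₀ hx₀mem).2]
  have hΔ : ∀ x ∈ Ioo (-ρ₁) ρ₁, ∀ y ∈ Ioo (-ρ₁) ρ₁,
      |doubleDiff R x₀ y₀ x y| ≤ 2 * ω / c ^ 2 :=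
    fun x hx y hy => (le_div_iff₀' (by positivity)).2 <| SupControl.mul_sq_abs_le hc
      (fun x hx y hy => abs_doubleDiff_le hω hx₀mem hx hy₀mem hy) hsnd hfst hx hy
  have h0 : (0 : ℝ) ∈ Ioo (-ρ₁) ρ₁ := ⟨neg_lt_zero.2 hρ₁, hρ₁⟩
  have hlin : ∀ x ∈ Ioo (-ρ₁) ρ₁, ∀ y ∈ Ioo (-ρ₁) ρ₁,
      |R (x, y) - (b * x + d * y)| ≤ 8 * ω / c ^ 2 := fun x hx y hy =>
    (abs_sub_linear_le_of_abs_doubleDiff_le h0 hΔ hb hd hx hy).trans_eq (by ring)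
  have hslope : ρ * (|b| + |d|) ≤ ω + 16 * ω / c ^ 2 :=
    (mul_abs_add_abs_le_of_abs_sub_linear_le hρ
      (fun p hp => hlin p.1 (hx₀ hp.1) p.2 (hy₀ hp.2)) hω).trans_eq (by ring)
  rintro ⟨x, y⟩ ⟨hx, hy⟩
  calc |R (x, y)| = |(R (x, y) - (b * x + d * y)) + (b * x + d * y)| := by ring_nf
    _ ≤ |R (x, y) - (b * x + d * y)| + (|b| * |x| + |d| * |y|) := by
        rw [← abs_mul, ← abs_mul]
        exact (abs_add_le _ _).trans (add_le_add_right (abs_add_le _ _) _)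
    _ ≤ 8 * ω / c ^ 2 + (|b| * ρ₁ + |d| * ρ₁) := by
        gcongr
        exacts [hlin x hx y hy, (abs_lt.2 hx).le, (abs_lt.2 hy).le]
    _ = 8 * ω / c ^ 2 + ρ₁ / ρ * (ρ * (|b| + |d|)) := by field_simp
    _ ≤ 8 * ω / c ^ 2 + ρ₁ / ρ * (ω + 16 * ω / c ^ 2) := by gcongr
    _ = (8 / c ^ 2 + ρ₁ / ρ * (1 + 16 / c ^ 2)) * ω := by ring

theorem oscillation_lower_bound_general
    (K : ℕ) (hK : 1 ≤ K) (ρ₁ D : ℝ)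
    (c₀ : ℝ → ℝ) (hc₀ : ∀ ρ ∈ Ioo (0 : ℝ) ρ₁, c₀ ρ ∈ Ioc (0 : ℝ) 1)
    (φ : Fin 2 → ℝ → ℝ)
    (hbound : ∀ i, ∀ s ∈ Ioo (-ρ₁) ρ₁, |φ i s| ≤ D)
    (hlocal : ∀ i, ∀ c : ℝ, ∀ P : Polynomial ℝ, P.natDegree ≤ K →
      ∀ ρ ∈ Ioo (0 : ℝ) ρ₁, ∀ s₀ : ℝ, Ioo (s₀ - ρ) (s₀ + ρ) ⊆ Ioo (-ρ₁) ρ₁ →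
        c₀ ρ * sSup ((fun s => |c * φ i s + P.eval s|) '' Ioo (-ρ₁) ρ₁)
          ≤ sSup ((fun s => |c * φ i s + P.eval s|) '' Ioo (s₀ - ρ) (s₀ + ρ))) :
    ∀ ρ ∈ Ioo (0 : ℝ) ρ₁, ∃ κ : ℝ, 0 < κ ∧
      ∀ z₀ ∈ Ioo (-ρ₁ + ρ) (ρ₁ - ρ), ∀ y₀ ∈ Ioo (-ρ₁ + ρ) (ρ₁ - ρ),
      ∀ h₁ h₂ : ℝ, ∀ P : MvPolynomial (Fin 2) ℝ,
        MvPolynomial.degreeOf 0 P ≤ K → MvPolynomial.degreeOf 1 P ≤ K →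
        (∀ z : ℝ, MvPolynomial.eval ![z, 0] P = 0) →
        (∀ y : ℝ, MvPolynomial.eval ![0, y] P = 0) →
        (let R : ℝ × ℝ → ℝ := fun p =>
            h₁ * p.2 * φ 0 p.1 + h₂ * p.1 * φ 1 p.2 + MvPolynomial.eval ![p.1, p.2] P
         let Q : Set (ℝ × ℝ) := Ioo (z₀ - ρ) (z₀ + ρ) ×ˢ Ioo (y₀ - ρ) (y₀ + ρ)
         κ * sSup ((fun p => |R p|) '' (Ioo (-ρ₁) ρ₁ ×ˢ Ioo (-ρ₁) ρ₁))
           ≤ sSup (R '' Q) - sInf (R '' Q)) := by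
  intro ρ hρ
  obtain ⟨hρ₀, hρρ₁⟩ := hρ
  have hc := (hc₀ ρ ⟨hρ₀, hρρ₁⟩).1
  have hρ₁ : 0 < ρ₁ := hρ₀.trans hρρ₁
  have hI : (Ioo (-ρ₁) ρ₁).Nonempty := nonempty_Ioo.2 (by linarith)
  refine ⟨(8 / c₀ ρ ^ 2 + ρ₁ / ρ * (1 + 16 / c₀ ρ ^ 2))⁻¹, by positivity, ?_⟩
  intro z₀ hz₀ y₀ hy₀ h₁ h₂ P hP₀ hP₁ hPz hPy R Q
  have hW : ∀ s₀ ∈ Ioo (-ρ₁ + ρ) (ρ₁ - ρ), Ioo (s₀ - ρ) (s₀ + ρ) ⊆ Ioo (-ρ₁) ρ₁ :=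
    fun s₀ hs₀ => Ioo_subset_Ioo (by linarith [hs₀.1]) (by linarith [hs₀.2])
  have hRQ : IsBounded (R '' Q) :=
    (isBounded_image_mul_add_mul_add_eval (Metric.isBounded_Ioo _ _) (hbound 0) (hbound 1)
      h₁ h₂ P).subset (image_mono (prod_mono (hW z₀ hz₀) (hW y₀ hy₀)))
  have hosc : ∀ p ∈ Q, ∀ q ∈ Q, R p - R q ≤ sSup (R '' Q) - sInf (R '' Q) :=
    fun _ hp _ hq => sub_le_csSup_image_sub_csInf_image hRQ hp hq
  have hctrl : ∀ i, ∀ s₀ ∈ Ioo (-ρ₁ + ρ) (ρ₁ - ρ), ∀ f ∈ templateSpace (φ i) K,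
      SupControl (c₀ ρ) (Ioo (s₀ - ρ) (s₀ + ρ)) (Ioo (-ρ₁) ρ₁) f := fun i s₀ hs₀ _ =>
    templateSpace.supControl hc.le (Metric.isBounded_Ioo _ _) (hbound i)
      (nonempty_Ioo.2 (by linarith)) fun a Q hQ => hlocal i a Q hQ ρ ⟨hρ₀, hρρ₁⟩ s₀ (hW s₀ hs₀)
  have hsnd : ∀ x, doubleDiff R z₀ y₀ x ∈ templateSpace (φ 1) K :=
    doubleDiff_mem_right (T := (templateSpace (φ 1) K).toAddSubgroup)
      (mem_templateSpace_of_slice_snd hK hP₁ h₁ h₂) const_mem_templateSpace z₀ y₀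
  have hfst : ∀ y, (fun x => doubleDiff R z₀ y₀ x y) ∈ templateSpace (φ 0) K :=
    doubleDiff_mem_left (T := (templateSpace (φ 0) K).toAddSubgroup)
      (mem_templateSpace_of_slice_fst hK hP₀ h₁ h₂) const_mem_templateSpace z₀ y₀
  have hR := abs_le_mul_of_supControl_doubleDiff hρ₀ hc (hW z₀ hz₀) (hW y₀ hy₀) hosc
    (fun x _ => hctrl 1 y₀ hy₀ _ (hsnd x)) (fun y _ => hctrl 0 z₀ hz₀ _ (hfst y))
    (b := h₂ * φ 1 0) (d := h₁ * φ 0 0)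
    (fun x => by simp only [R, hPz]; ring) (fun y => by simp only [R, hPy]; ring)
  rw [inv_mul_le_iff₀ (by positivity)]
  exact csSup_le ((hI.prod hI).image _) (forall_mem_image.2 hR)

/-- (Lower bound on the oscillation of template-type functions.)
Fix `K ≥ 1`, `ρ₁ > 1`, `D > 0`, `κ₁ > 0` and `c₀ : (0,ρ₁) → (0,1]`.  Let `φ₁, φ₂` be continuous
functions on `(-ρ₁, ρ₁)` bounded by `D` satisfying (i) the localized lower bound with constant
`c₀ ρ` on every subinterval `B(s₀,ρ) ⊆ (-ρ₁,ρ₁)` for every function `c φᵢ + P` with `P` a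
polynomial of degree `≤ K`, and (ii) the non-degeneracy `sup_J |φᵢ + P| > κ₁` on `J = [0,1)` and
`J = (-1,0]` for every such `P`.  Then for every `ρ ∈ (0,ρ₁)` there exists `κ > 0` such that for
every `(z₀,y₀) ∈ (-ρ₁+ρ, ρ₁-ρ)²`, all `h₁ h₂ ∈ ℝ`, and every real polynomial `P(z,y)` of degree
`≤ K` in each variable with `P(z,0) = P(0,y) = 0`, the function
`R(z,y) = h₁ y φ₁(z) + h₂ z φ₂(y) + P(z,y)` satisfies
`Osc_{B(z₀,ρ)×B(y₀,ρ)} R ≥ κ sup_{(-ρ₁,ρ₁)²} |R|`. -/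
theorem oscillation_lower_bound
    (K : ℕ) (hK : 1 ≤ K) (ρ₁ D κ₁ : ℝ) (hρ₁ : 1 < ρ₁) (hD : 0 < D) (hκ₁ : 0 < κ₁)
    (c₀ : ℝ → ℝ) (hc₀ : ∀ ρ ∈ Ioo (0 : ℝ) ρ₁, c₀ ρ ∈ Ioc (0 : ℝ) 1)
    (φ : Fin 2 → ℝ → ℝ)
    (hcont : ∀ i, ContinuousOn (φ i) (Ioo (-ρ₁) ρ₁))
    (hbound : ∀ i, ∀ s ∈ Ioo (-ρ₁) ρ₁, |φ i s| ≤ D)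
    (hlocal : ∀ i, ∀ c : ℝ, ∀ P : Polynomial ℝ, P.natDegree ≤ K →
      ∀ ρ ∈ Ioo (0 : ℝ) ρ₁, ∀ s₀ : ℝ, Ioo (s₀ - ρ) (s₀ + ρ) ⊆ Ioo (-ρ₁) ρ₁ →
        c₀ ρ * sSup ((fun s => |c * φ i s + P.eval s|) '' Ioo (-ρ₁) ρ₁)
          ≤ sSup ((fun s => |c * φ i s + P.eval s|) '' Ioo (s₀ - ρ) (s₀ + ρ)))
    (huni : ∀ i, ∀ P : Polynomial ℝ, P.natDegree ≤ K →
      κ₁ < sSup ((fun s => |φ i s + P.eval s|) '' Ico (0 : ℝ) 1) ∧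
      κ₁ < sSup ((fun s => |φ i s + P.eval s|) '' Ioc (-1 : ℝ) 0)) :
    ∀ ρ ∈ Ioo (0 : ℝ) ρ₁, ∃ κ : ℝ, 0 < κ ∧
      ∀ z₀ ∈ Ioo (-ρ₁ + ρ) (ρ₁ - ρ), ∀ y₀ ∈ Ioo (-ρ₁ + ρ) (ρ₁ - ρ),
      ∀ h₁ h₂ : ℝ, ∀ P : MvPolynomial (Fin 2) ℝ,
        MvPolynomial.degreeOf 0 P ≤ K → MvPolynomial.degreeOf 1 P ≤ K →
        (∀ z : ℝ, MvPolynomial.eval ![z, 0] P = 0) →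
        (∀ y : ℝ, MvPolynomial.eval ![0, y] P = 0) →
        (let R : ℝ × ℝ → ℝ := fun p =>
            h₁ * p.2 * φ 0 p.1 + h₂ * p.1 * φ 1 p.2 + MvPolynomial.eval ![p.1, p.2] P
         let Q : Set (ℝ × ℝ) := Ioo (z₀ - ρ) (z₀ + ρ) ×ˢ Ioo (y₀ - ρ) (y₀ + ρ)
         κ * sSup ((fun p => |R p|) '' (Ioo (-ρ₁) ρ₁ ×ˢ Ioo (-ρ₁) ρ₁))
           ≤ sSup (R '' Q) - sInf (R '' Q)) :=
  oscillation_lower_bound_general K hK ρ₁ D c₀ hc₀ φ hbound hlocal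
end

section
/- Fix θ ∈ (0,1], an integer K ≥ 1, and reals ρ₁ ≥ 1, D > 0, κ₁ > 0. Let ψ : (−ρ₁, ρ₁) → ℝ satisfy ψ(0) = 0, sup_{(−ρ₁,ρ₁)} |ψ| ≤ D, |ψ(s) − ψ(t)| ≤ D |s−t|^θ for all s, t ∈ (−ρ₁, ρ₁), and suppose that for every real polynomial P of degree ≤ K one has sup_{s∈J} |ψ(s) + P(s)| > κ₁ both for J = [0,1) and for J = (−1,0]. Then there exists C > 0, depending only on θ, K, D, κ₁, such that for every ρ ∈ (0,1], every c ∈ ℝ, and every real polynomial P of degree ≤ K with P(0) = 0: sup_{|s|<ρ} |c ψ(s) + P(s)| ≤ C ρ^θ · sup_{|s|<ρ₁} |c ψ(s) + P(s)|. -/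
/-!
Let `M` be the supremum of `|c ψ + P|` on `(-ρ₁, ρ₁)`. Nondegeneracy of `ψ` on `[0, 1)`, applied
to the polynomial `c⁻¹ P`, gives `|c| κ₁ ≤ M`, so `|P| ≤ M + |c| D ≤ (1 + D / κ₁) M` on `[0, 1/2]`.
On polynomials of degree `≤ K` the sup norm on an interval controls the coefficients (Lagrange
interpolation at `K + 1` nodes), and `P 0 = 0`, so `|P s| ≲ M |s| ≤ M |s| ^ θ` for `|s| ≤ 1`.
The Hölder bound at `0` gives `|c ψ s| ≤ |c| D |s| ^ θ ≤ (D / κ₁) M |s| ^ θ`.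
-/

open Set Polynomial

namespace Polynomial

theorem exists_abs_coeff_le_mul_of_abs_eval_le (n : ℕ) {a b : ℝ} (hab : a < b) :
    ∃ C : ℝ, 0 ≤ C ∧ ∀ P : ℝ[X], P.natDegree ≤ n → ∀ B : ℝ,
      (∀ s ∈ Icc a b, |P.eval s| ≤ B) → ∀ i, |P.coeff i| ≤ C * B := by
  classical
  set v : Fin (n + 1) → ℝ := fun j => a + (b - a) * j / (n + 1) with hv
  have hv_inj : Function.Injective v := by
    intro i j hij
    have hba : b - a ≠ 0 := (sub_pos.2 hab).ne'
    have : (i : ℝ) = j := by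
      simp only [hv, add_right_inj] at hij
      field_simp at hij
      exact hij
    exact Fin.ext (by exact_mod_cast this)
  have hv_mem : ∀ j, v j ∈ Icc a b := by
    intro j
    have hj : (j : ℝ) ≤ n + 1 := by exact_mod_cast j.isLt.le
    have hba : 0 ≤ b - a := (sub_pos.2 hab).le
    constructor
    · have : 0 ≤ (b - a) * j / (n + 1) := by positivity
      linarith
    · have : (b - a) * j / (n + 1) ≤ b - a := by
        rw [div_le_iff₀ (by positivity)]
        exact mul_le_mul_of_nonneg_left hj hba
      linarith
  let Φ : (Fin (n + 1) → ℝ) →L[ℝ] (Fin (n + 1) → ℝ) := LinearMap.toContinuousLinearMap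
    (LinearMap.pi fun i => (lcoeff ℝ i).comp (Lagrange.interpolate Finset.univ v))
  refine ⟨‖Φ‖, norm_nonneg _, fun P hP B hB i => ?_⟩
  have hB0 : 0 ≤ B := (abs_nonneg _).trans (hB a (left_mem_Icc.2 hab.le))
  rcases le_or_gt i n with hi | hi
  · set r : Fin (n + 1) → ℝ := fun j => P.eval (v j)
    have hP_eq : P = Lagrange.interpolate Finset.univ v r := by
      refine Lagrange.eq_interpolate hv_inj.injOn ?_
      rw [Finset.card_univ, Fintype.card_fin]
      exact degree_le_natDegree.trans_lt (by exact_mod_cast Nat.lt_succ_of_le hP)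
    have hr : ‖r‖ ≤ B := (pi_norm_le_iff_of_nonneg hB0).2 fun j => hB _ (hv_mem j)
    calc |P.coeff i| = ‖Φ r ⟨i, Nat.lt_succ_of_le hi⟩‖ := by
          conv_lhs => rw [hP_eq]
          rfl
      _ ≤ ‖Φ r‖ := norm_le_pi_norm _ _
      _ ≤ ‖Φ‖ * ‖r‖ := Φ.le_opNorm r
      _ ≤ ‖Φ‖ * B := by gcongr
  · rw [coeff_eq_zero_of_natDegree_lt (hP.trans_lt hi), abs_zero]
    positivity

theorem exists_abs_eval_le_mul_abs_of_eval_zero (n : ℕ) {a b : ℝ} (hab : a < b) :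
    ∃ C : ℝ, 0 ≤ C ∧ ∀ P : ℝ[X], P.natDegree ≤ n → P.eval 0 = 0 → ∀ B : ℝ,
      (∀ s ∈ Icc a b, |P.eval s| ≤ B) → ∀ s : ℝ, |s| ≤ 1 → |P.eval s| ≤ C * B * |s| := by
  obtain ⟨C, hC, hcoeff⟩ := exists_abs_coeff_le_mul_of_abs_eval_le n hab
  refine ⟨n * C, by positivity, fun P hP hP0 B hB s hs => ?_⟩
  have hB0 : 0 ≤ B := (abs_nonneg _).trans (hB a (left_mem_Icc.2 hab.le))
  have hterm : ∀ i : ℕ, |P.coeff (i + 1) * s ^ (i + 1)| ≤ C * B * |s| := fun i => by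
    rw [abs_mul, abs_pow, pow_succ']
    exact mul_le_mul (hcoeff P hP B hB _)
      (mul_le_of_le_one_right (abs_nonneg s) (pow_le_one₀ (abs_nonneg s) hs))
      (by positivity) (by positivity)
  calc |P.eval s|
      = |∑ i ∈ Finset.range n, P.coeff (i + 1) * s ^ (i + 1)| := by
        rw [eval_eq_sum_range' (Nat.lt_succ_of_le hP), Finset.sum_range_succ',
          coeff_zero_eq_eval_zero, hP0, zero_mul, add_zero]
    _ ≤ ∑ i ∈ Finset.range n, |P.coeff (i + 1) * s ^ (i + 1)| := Finset.abs_sum_le_sum_abs _ _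
    _ ≤ ∑ _i ∈ Finset.range n, C * B * |s| := Finset.sum_le_sum fun i _ => hterm i
    _ = n * C * B * |s| := by rw [Finset.sum_const, Finset.card_range, nsmul_eq_mul]; ring

end Polynomial

theorem bddAbove_abs_mul_add_eval_image {ψ : ℝ → ℝ} {S : Set ℝ} {D : ℝ}
    (hS : Bornology.IsBounded S) (hψ : ∀ s ∈ S, |ψ s| ≤ D) (c : ℝ) (P : ℝ[X]) :
    BddAbove ((fun s => |c * ψ s + P.eval s|) '' S) := by
  obtain ⟨R, hR⟩ := hS.isCompact_closure.exists_bound_of_continuousOn P.continuous.continuousOn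
  refine ⟨|c| * D + R, ?_⟩
  rintro _ ⟨s, hs, rfl⟩
  calc |c * ψ s + P.eval s| ≤ |c| * |ψ s| + |P.eval s| := by
        rw [← abs_mul]; exact abs_add_le _ _
    _ ≤ |c| * D + R := by
        gcongr
        · exact hψ s hs
        · exact hR s (subset_closure hs)

theorem abs_mul_le_sSup_of_lt_sSup {ψ g : ℝ → ℝ} {S T : Set ℝ} {c κ : ℝ}
    (hS : S.Nonempty) (hST : S ⊆ T) (hT : BddAbove ((fun s => |c * ψ s + g s|) '' T))
    (h : κ < sSup ((fun s => |ψ s + c⁻¹ * g s|) '' S)) :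
    |c| * κ ≤ sSup ((fun s => |c * ψ s + g s|) '' T) := by
  rcases eq_or_ne c 0 with rfl | hc
  · rw [abs_zero, zero_mul]
    exact Real.sSup_nonneg (by rintro _ ⟨s, -, rfl⟩; exact abs_nonneg _)
  obtain ⟨_, ⟨s, hs, rfl⟩, hκs⟩ := exists_lt_of_lt_csSup (hS.image _) h
  calc |c| * κ ≤ |c| * |ψ s + c⁻¹ * g s| := by gcongr
    _ = |c * ψ s + g s| := by rw [← abs_mul, mul_add, mul_inv_cancel_left₀ hc]
    _ ≤ _ := le_csSup hT ⟨s, hST hs, rfl⟩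

theorem exists_abs_mul_add_eval_le_mul_rpow {θ : ℝ} (hθ0 : 0 ≤ θ) (hθ1 : θ ≤ 1) (K : ℕ)
    {D κ : ℝ} (hD : 0 < D) (hκ : 0 < κ) :
    ∃ C : ℝ, 0 < C ∧ ∀ (ψ : ℝ → ℝ) (c : ℝ) (P : ℝ[X]) (M : ℝ), P.natDegree ≤ K → P.eval 0 = 0 →
      (∀ s, |s| < 1 → |ψ s| ≤ D * |s| ^ θ) → (∀ s, |s| < 1 → |c * ψ s + P.eval s| ≤ M) →
      |c| * κ ≤ M → ∀ ρ, 0 < ρ → ρ ≤ 1 → ∀ s, |s| < ρ → |c * ψ s + P.eval s| ≤ C * ρ ^ θ * M := by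
  obtain ⟨C₀, hC₀, hmarkov⟩ :=
    exists_abs_eval_le_mul_abs_of_eval_zero K (a := 0) (b := 1 / 2) (by norm_num)
  refine ⟨D * (1 + C₀) / κ + C₀, by positivity, ?_⟩
  intro ψ c P M hPK hP0 hψ hM hcM ρ hρ0 hρ1 s hsρ
  have hM0 : 0 ≤ M := (abs_nonneg _).trans (hM 0 (by simp))
  have hPB : ∀ t ∈ Icc (0 : ℝ) (1 / 2), |P.eval t| ≤ M + |c| * D := by
    intro t ht
    have ht1 : |t| < 1 := abs_lt.2 ⟨by linarith [ht.1], by linarith [ht.2]⟩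
    have hψt : |ψ t| ≤ D :=
      (hψ t ht1).trans (mul_le_of_le_one_right hD.le (Real.rpow_le_one (abs_nonneg t) ht1.le hθ0))
    calc |P.eval t| = |(c * ψ t + P.eval t) - c * ψ t| := by rw [add_sub_cancel_left]
      _ ≤ |c * ψ t + P.eval t| + |c| * |ψ t| := by rw [← abs_mul]; exact abs_sub _ _
      _ ≤ M + |c| * D := by gcongr; exact hM t ht1
  have hψs : |ψ s| ≤ D * ρ ^ θ := (hψ s (hsρ.trans_le hρ1)).trans (by gcongr)
  have hPs : |P.eval s| ≤ C₀ * (M + |c| * D) * ρ ^ θ :=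
    calc |P.eval s| ≤ C₀ * (M + |c| * D) * |s| := hmarkov P hPK hP0 _ hPB s (hsρ.le.trans hρ1)
      _ ≤ C₀ * (M + |c| * D) * ρ ^ θ := by
        gcongr
        exact hsρ.le.trans (Real.self_le_rpow_of_le_one hρ0.le hρ1 hθ1)
  have hc : |c| ≤ M / κ := (le_div_iff₀ hκ).2 hcM
  calc |c * ψ s + P.eval s| ≤ |c| * |ψ s| + |P.eval s| := by rw [← abs_mul]; exact abs_add_le _ _
    _ ≤ (|c| * (D * (1 + C₀)) + C₀ * M) * ρ ^ θ := by
        nlinarith [mul_le_mul_of_nonneg_left hψs (abs_nonneg c)]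
    _ ≤ (M / κ * (D * (1 + C₀)) + C₀ * M) * ρ ^ θ := by gcongr
    _ = (D * (1 + C₀) / κ + C₀) * ρ ^ θ * M := by ring

theorem holder_template_small_scale_bound_general
    (θ : ℝ) (hθ0 : 0 < θ) (hθ1 : θ ≤ 1) (K : ℕ)
    (D κ₁ : ℝ) (hD : 0 < D) (hκ₁ : 0 < κ₁) :
    ∃ C : ℝ, 0 < C ∧
      ∀ ρ₁ : ℝ, 1 ≤ ρ₁ →
      ∀ ψ : ℝ → ℝ, ψ 0 = 0 →
        (∀ s ∈ Ioo (-ρ₁) ρ₁, |ψ s| ≤ D) →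
        (∀ s ∈ Ioo (-ρ₁) ρ₁, ∀ t ∈ Ioo (-ρ₁) ρ₁, |ψ s - ψ t| ≤ D * |s - t| ^ θ) →
        (∀ P : Polynomial ℝ, P.natDegree ≤ K →
          κ₁ < sSup ((fun s => |ψ s + P.eval s|) '' Ico (0 : ℝ) 1) ∧
          κ₁ < sSup ((fun s => |ψ s + P.eval s|) '' Ioc (-1 : ℝ) 0)) →
        ∀ ρ : ℝ, 0 < ρ → ρ ≤ 1 →
          ∀ c : ℝ, ∀ P : Polynomial ℝ, P.natDegree ≤ K → P.eval 0 = 0 →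
            sSup ((fun s => |c * ψ s + P.eval s|) '' Ioo (-ρ) ρ)
              ≤ C * ρ ^ θ * sSup ((fun s => |c * ψ s + P.eval s|) '' Ioo (-ρ₁) ρ₁) := by
  obtain ⟨C, hC, hbound⟩ := exists_abs_mul_add_eval_le_mul_rpow hθ0.le hθ1 K hD hκ₁
  refine ⟨C, hC, ?_⟩
  intro ρ₁ hρ₁ ψ hψ0 hψD hψθ hψκ ρ hρ0 hρ1 c P hPK hP0
  set M := sSup ((fun s => |c * ψ s + P.eval s|) '' Ioo (-ρ₁) ρ₁)
  have hball : ∀ s, |s| < 1 → s ∈ Ioo (-ρ₁) ρ₁ := fun s hs => abs_lt.1 (hs.trans_le hρ₁)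
  have hbdd := bddAbove_abs_mul_add_eval_image (Metric.isBounded_Ioo _ _) hψD c P
  have hψ : ∀ s, |s| < 1 → |ψ s| ≤ D * |s| ^ θ := fun s hs => by
    simpa [hψ0] using hψθ s (hball s hs) 0 (hball 0 (by simp))
  have hM : ∀ s, |s| < 1 → |c * ψ s + P.eval s| ≤ M := fun s hs =>
    le_csSup hbdd ⟨s, hball s hs, rfl⟩
  have hcM : |c| * κ₁ ≤ M := by
    refine abs_mul_le_sSup_of_lt_sSup (nonempty_Ico.2 one_pos) (fun s hs => ?_) hbdd ?_
    · exact hball s (abs_lt.2 ⟨by linarith [hs.1], hs.2⟩)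
    · simpa only [eval_smul, smul_eq_mul] using
        (hψκ (c⁻¹ • P) ((natDegree_smul_le _ _).trans hPK)).1
  have hM0 : 0 ≤ M := Real.sSup_nonneg (by rintro _ ⟨s, -, rfl⟩; exact abs_nonneg _)
  refine Real.sSup_le ?_ (by positivity)
  rintro _ ⟨s, hs, rfl⟩
  exact hbound ψ c P M hPK hP0 hψ hM hcM ρ hρ0 hρ1 s (abs_lt.2 hs)

/-- Fix `θ ∈ (0,1]`, an integer `K ≥ 1`, and reals `D > 0`, `κ₁ > 0`.
There exists a constant `C > 0` (depending only on `θ, K, D, κ₁`) such that the following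
holds.  Let `ρ₁ ≥ 1` and let `ψ : (-ρ₁, ρ₁) → ℝ` satisfy `ψ 0 = 0`, `|ψ| ≤ D`, be `θ`-Hölder
with constant `D`, and satisfy `sup_{s ∈ J} |ψ s + P s| > κ₁` for every real polynomial `P` of
degree at most `K`, both for `J = [0,1)` and `J = (-1,0]`.  Then for every `ρ ∈ (0,1]`, every
`c ∈ ℝ`, and every real polynomial `P` of degree `≤ K` with `P 0 = 0`,
`sup_{|s| < ρ} |c ψ s + P s| ≤ C ρ^θ sup_{|s| < ρ₁} |c ψ s + P s|`. -/
theorem holder_template_small_scale_bound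
    (θ : ℝ) (hθ0 : 0 < θ) (hθ1 : θ ≤ 1) (K : ℕ) (hK : 1 ≤ K)
    (D κ₁ : ℝ) (hD : 0 < D) (hκ₁ : 0 < κ₁) :
    ∃ C : ℝ, 0 < C ∧
      ∀ ρ₁ : ℝ, 1 ≤ ρ₁ →
      ∀ ψ : ℝ → ℝ, ψ 0 = 0 →
        (∀ s ∈ Ioo (-ρ₁) ρ₁, |ψ s| ≤ D) →
        (∀ s ∈ Ioo (-ρ₁) ρ₁, ∀ t ∈ Ioo (-ρ₁) ρ₁, |ψ s - ψ t| ≤ D * |s - t| ^ θ) →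
        (∀ P : Polynomial ℝ, P.natDegree ≤ K →
          κ₁ < sSup ((fun s => |ψ s + P.eval s|) '' Ico (0 : ℝ) 1) ∧
          κ₁ < sSup ((fun s => |ψ s + P.eval s|) '' Ioc (-1 : ℝ) 0)) →
        ∀ ρ : ℝ, 0 < ρ → ρ ≤ 1 →
          ∀ c : ℝ, ∀ P : Polynomial ℝ, P.natDegree ≤ K → P.eval 0 = 0 →
            sSup ((fun s => |c * ψ s + P.eval s|) '' Ioo (-ρ) ρ)
              ≤ C * ρ ^ θ * sSup ((fun s => |c * ψ s + P.eval s|) '' Ioo (-ρ₁) ρ₁) :=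
  holder_template_small_scale_bound_general θ hθ0 hθ1 K D κ₁ hD hκ₁
end

section
/- Let (Ω, ℱ, ℙ) be a probability space equipped with a filtration (ℱ_k)_{k≥0}, and let (X_k)_{k≥1} be random variables with values in {0,1} such that X_k is ℱ_k-measurable for every k ≥ 1 and ℙ(X_k = 1 ∣ ℱ_{k−1}) ≥ η almost surely for every k ≥ 1, where η ∈ (0,1] is a constant. Then there exist η' > 0 and C > 0, depending only on η, such that for every integer m > C: ℙ( ∑_{k=1}^m X_k < η' m ) < e^{−η' m}. -/
/-! A Chernoff bound for the lower tail of `S_m = ∑_{k ≤ m} X_k`. Since `X_k ∈ {0, 1}`,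
`e^{-X_k} = 1 - (1 - e⁻¹) X_k`, so the hypothesis gives
`E[e^{-X_k} | ℱ_{k-1}] ≤ 1 - (1 - e⁻¹) η ≤ e^{-(1 - e⁻¹) η}`. Pulling out the
`ℱ_{k-1}`-measurable factor `e^{-S_{k-1}}` and iterating yields `E[e^{-S_m}] ≤ e^{-3 η' m}` with
`η' = (1 - e⁻¹) η / 3`, and Markov's inequality for `e^{-S_m}` then gives
`ℙ(S_m ≤ η' m) ≤ e^{-2 η' m} < e^{-η' m}` for every `m ≥ 1`. -/

open MeasureTheory Real Finset

universe u

section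

variable {Ω : Type u} {m m0 : MeasurableSpace Ω} {μ : Measure Ω}

theorem integrable_exp_neg_of_nonneg [IsFiniteMeasure μ] {f : Ω → ℝ} (hf : Measurable f)
    (hf0 : ∀ ω, 0 ≤ f ω) : Integrable (fun ω ↦ exp (-f ω)) μ :=
  Integrable.of_bound (hf.neg.exp.aestronglyMeasurable) 1 <| .of_forall fun ω ↦ by
    rw [norm_of_nonneg (exp_pos _).le, exp_le_one_iff, neg_nonpos]
    exact hf0 ω

theorem integral_mul_le_of_condExp_le [IsFiniteMeasure μ] (hm : m ≤ m0) {f g : Ω → ℝ} {a : ℝ}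
    (hf : StronglyMeasurable[m] f) (hf0 : 0 ≤ᵐ[μ] f) (hfi : Integrable f μ)
    (hg : Integrable g μ) (hfg : Integrable (f * g) μ) (hga : ∀ᵐ ω ∂μ, μ[g | m] ω ≤ a) :
    ∫ ω, f ω * g ω ∂μ ≤ a * ∫ ω, f ω ∂μ := by
  have hpull : μ[f * g | m] =ᵐ[μ] f * μ[g | m] := condExp_mul_of_stronglyMeasurable_left hf hfg hg
  calc ∫ ω, f ω * g ω ∂μ = ∫ ω, (μ[f * g | m]) ω ∂μ := (integral_condExp hm).symm
    _ = ∫ ω, f ω * μ[g | m] ω ∂μ := integral_congr_ae hpull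
    _ ≤ ∫ ω, a * f ω ∂μ := by
      refine integral_mono_ae (integrable_condExp.congr hpull) (hfi.const_mul a) ?_
      filter_upwards [hf0, hga] with ω hω0 hωa
      rw [mul_comm a]
      exact mul_le_mul_of_nonneg_left hωa hω0
    _ = a * ∫ ω, f ω ∂μ := integral_const_mul a _

theorem indicator_eq_one_eq_self {Y : Ω → ℝ} (hY : ∀ ω, Y ω = 0 ∨ Y ω = 1) :
    {ω | Y ω = 1}.indicator (fun _ ↦ (1 : ℝ)) = Y := by
  ext ω
  rcases hY ω with h | h <;> simp [Set.indicator, h]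

theorem condExp_exp_neg_le [IsFiniteMeasure μ] (hm : m ≤ m0) {Y : Ω → ℝ} (hY : Measurable Y)
    (hY01 : ∀ ω, Y ω = 0 ∨ Y ω = 1) {η : ℝ} (hη : ∀ᵐ ω ∂μ, η ≤ μ[Y | m] ω) :
    ∀ᵐ ω ∂μ, μ[fun ω ↦ exp (-Y ω) | m] ω ≤ exp (-((1 - exp (-1)) * η)) := by
  set c := 1 - exp (-1)
  have hc : 0 ≤ c := sub_nonneg.mpr (exp_le_one_iff.mpr (by norm_num))
  have hYi : Integrable Y μ := by
    refine Integrable.of_bound hY.aestronglyMeasurable 1 (.of_forall fun ω ↦ ?_)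
    rcases hY01 ω with h | h <;> simp [h]
  have haffine : (fun ω ↦ exp (-Y ω)) = (fun _ ↦ (1 : ℝ)) - c • Y := by
    ext ω
    rcases hY01 ω with h | h <;> simp [h, c]
  rw [haffine]
  filter_upwards [condExp_sub (integrable_const 1) (hYi.smul c) m, condExp_smul (m := m) c Y, hη]
    with ω hsub hsmul hηω
  rw [hsub, Pi.sub_apply, hsmul, condExp_const hm, Pi.smul_apply, smul_eq_mul]
  calc 1 - c * μ[Y | m] ω ≤ 1 - c * η := by gcongr
    _ ≤ exp (-(c * η)) := by linarith [add_one_le_exp (-(c * η))]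

end

section

variable {Ω : Type u} {m0 : MeasurableSpace Ω} {μ : Measure Ω} {ℱ : Filtration ℕ m0}
  {X : ℕ → Ω → ℝ}

theorem measurable_sum_Icc_of_adapted (hadapted : ∀ k, 1 ≤ k → Measurable[ℱ k] (X k)) (n : ℕ) :
    Measurable[ℱ n] fun ω ↦ ∑ k ∈ Icc 1 n, X k ω :=
  Finset.measurable_sum _ fun k hk ↦
    (hadapted k (mem_Icc.mp hk).1).mono (ℱ.mono (mem_Icc.mp hk).2) le_rfl

theorem integrable_exp_neg_sum [IsFiniteMeasure μ]
    (hval : ∀ k, 1 ≤ k → ∀ ω, X k ω = 0 ∨ X k ω = 1)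
    (hadapted : ∀ k, 1 ≤ k → Measurable[ℱ k] (X k)) (n : ℕ) :
    Integrable (fun ω ↦ exp (-∑ k ∈ Icc 1 n, X k ω)) μ :=
  integrable_exp_neg_of_nonneg ((measurable_sum_Icc_of_adapted hadapted n).mono (ℱ.le n) le_rfl)
    fun ω ↦ sum_nonneg fun k hk ↦ by rcases hval k (mem_Icc.mp hk).1 ω with h | h <;> simp [h]

theorem integral_exp_neg_sum_le [IsProbabilityMeasure μ] {η : ℝ}
    (hval : ∀ k, 1 ≤ k → ∀ ω, X k ω = 0 ∨ X k ω = 1)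
    (hadapted : ∀ k, 1 ≤ k → Measurable[ℱ k] (X k))
    (hcond : ∀ k, 1 ≤ k → ∀ᵐ ω ∂μ, η ≤ μ[X k | ℱ (k - 1)] ω) (n : ℕ) :
    ∫ ω, exp (-∑ k ∈ Icc 1 n, X k ω) ∂μ ≤ exp (-((1 - exp (-1)) * η) * n) := by
  have hint := integrable_exp_neg_sum (μ := μ) hval hadapted
  induction n with
  | zero => simp
  | succ n ih =>
    have hsplit (ω : Ω) : exp (-∑ k ∈ Icc 1 (n + 1), X k ω) =
        exp (-∑ k ∈ Icc 1 n, X k ω) * exp (-X (n + 1) ω) := by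
      rw [Finset.sum_Icc_succ_top (by omega), neg_add, exp_add]
    have hXn : Measurable (X (n + 1)) := (hadapted _ (by omega)).mono (ℱ.le _) le_rfl
    have hstep := integral_mul_le_of_condExp_le (ℱ.le n)
      (f := fun ω ↦ exp (-∑ k ∈ Icc 1 n, X k ω)) (g := fun ω ↦ exp (-X (n + 1) ω))
      (measurable_sum_Icc_of_adapted hadapted n).neg.exp.stronglyMeasurable
      (.of_forall fun ω ↦ (exp_pos _).le) (hint n)
      (integrable_exp_neg_of_nonneg hXn fun ω ↦ by
        rcases hval (n + 1) (by omega) ω with h | h <;> simp [h])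
      (by simpa only [Pi.mul_def, ← hsplit] using hint (n + 1))
      (condExp_exp_neg_le (ℱ.le n) hXn (hval _ (by omega)) (hcond (n + 1) (by omega)))
    calc ∫ ω, exp (-∑ k ∈ Icc 1 (n + 1), X k ω) ∂μ
        ≤ exp (-((1 - exp (-1)) * η)) * ∫ ω, exp (-∑ k ∈ Icc 1 n, X k ω) ∂μ := by
          simpa only [hsplit] using hstep
      _ ≤ exp (-((1 - exp (-1)) * η)) * exp (-((1 - exp (-1)) * η) * n) := by gcongr
      _ = exp (-((1 - exp (-1)) * η) * ↑(n + 1)) := by rw [← exp_add]; push_cast; ring_nf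

end

theorem adapted_coin_flip_large_deviation_general
    {Ω : Type*} {m0 : MeasurableSpace Ω} (ℙ : Measure Ω) [IsProbabilityMeasure ℙ]
    (ℱ : Filtration ℕ m0) (X : ℕ → Ω → ℝ) (η : ℝ) (hη0 : 0 < η)
    (hval : ∀ k : ℕ, 1 ≤ k → ∀ ω, X k ω = 0 ∨ X k ω = 1)
    (hadapted : ∀ k : ℕ, 1 ≤ k → Measurable[ℱ k] (X k))
    (hcond : ∀ k : ℕ, 1 ≤ k →
      ∀ᵐ ω ∂ℙ, η ≤ (ℙ[Set.indicator {ω' | X k ω' = 1} (fun _ => (1 : ℝ)) | ℱ (k - 1)]) ω) :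
    ∃ η' : ℝ, 0 < η' ∧ ∃ C : ℝ, 0 < C ∧
      ∀ m : ℕ, C < (m : ℝ) →
        ℙ {ω | ∑ k ∈ Finset.Icc 1 m, X k ω < η' * m} < ENNReal.ofReal (Real.exp (-η' * m)) := by
  have hc : 0 < 1 - exp (-1) := sub_pos.mpr (exp_lt_one_iff.mpr (by norm_num))
  refine ⟨(1 - exp (-1)) * η / 3, by positivity, 1, one_pos, fun m hm ↦ ?_⟩
  set η' := (1 - exp (-1)) * η / 3
  set S := fun ω ↦ ∑ k ∈ Icc 1 m, X k ω
  have hcondX (k : ℕ) (hk : 1 ≤ k) : ∀ᵐ ω ∂ℙ, η ≤ ℙ[X k | ℱ (k - 1)] ω := by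
    simpa only [indicator_eq_one_eq_self (hval k hk)] using hcond k hk
  have hmoment : ∫ ω, exp (-S ω) ∂ℙ ≤ exp (-(3 * η') * m) := by
    convert integral_exp_neg_sum_le hval hadapted hcondX m using 3
    ring
  have hchernoff : ℙ.real {ω | S ω ≤ η' * m} ≤ exp (η' * m) * ∫ ω, exp (-S ω) ∂ℙ := by
    have h := ProbabilityTheory.measure_le_le_exp_mul_mgf (μ := ℙ) (X := S) (η' * m) (t := -1)
      (by norm_num) (by simpa only [neg_one_mul] using integrable_exp_neg_sum hval hadapted m)
    simpa only [ProbabilityTheory.mgf, neg_neg, one_mul, neg_one_mul] using h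
  have hη'm : 0 < η' * m := by positivity
  calc ℙ {ω | S ω < η' * m} ≤ ℙ {ω | S ω ≤ η' * m} :=
        measure_mono <| Set.ofPred_subset_ofPred.mpr fun _ ↦ le_of_lt
    _ = ENNReal.ofReal (ℙ.real {ω | S ω ≤ η' * m}) :=
        (ofReal_measureReal (measure_ne_top _ _)).symm
    _ < ENNReal.ofReal (exp (-η' * m)) := by
      rw [ENNReal.ofReal_lt_ofReal_iff (exp_pos _)]
      calc ℙ.real {ω | S ω ≤ η' * m} ≤ exp (η' * m) * exp (-(3 * η') * m) := by
            grw [hchernoff, hmoment]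
        _ < exp (-η' * m) := by rw [← exp_add]; gcongr; linarith

/-- Large-deviation lower bound for an adapted `{0,1}`-valued process whose
conditional success probability, given the past, is at least `η` at every step: there exist
`η' > 0` and `C > 0`, depending only on `η`, such that for every integer `m > C`,
`ℙ(∑_{k=1}^m X_k < η' m) < e^{-η' m}`. -/
theorem adapted_coin_flip_large_deviation
    {Ω : Type*} {m0 : MeasurableSpace Ω} (ℙ : Measure Ω) [IsProbabilityMeasure ℙ]
    (ℱ : Filtration ℕ m0) (X : ℕ → Ω → ℝ) (η : ℝ) (hη0 : 0 < η) (hη1 : η ≤ 1)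
    (hval : ∀ k : ℕ, 1 ≤ k → ∀ ω, X k ω = 0 ∨ X k ω = 1)
    (hadapted : ∀ k : ℕ, 1 ≤ k → Measurable[ℱ k] (X k))
    (hcond : ∀ k : ℕ, 1 ≤ k →
      ∀ᵐ ω ∂ℙ, η ≤ (ℙ[Set.indicator {ω' | X k ω' = 1} (fun _ => (1 : ℝ)) | ℱ (k - 1)]) ω) :
    ∃ η' : ℝ, 0 < η' ∧ ∃ C : ℝ, 0 < C ∧
      ∀ m : ℕ, C < (m : ℝ) →
        ℙ {ω | ∑ k ∈ Finset.Icc 1 m, X k ω < η' * m} < ENNReal.ofReal (Real.exp (-η' * m)) :=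
  adapted_coin_flip_large_deviation_general ℙ ℱ X η hη0 hval hadapted hcond
end

section
/- Let (X, 𝒜, μ) be a probability space, n₁ ≥ 1 an integer, and σ : X → X a measurable map such that μ is invariant under σ^{n₁}. Let Ω̃ ∈ 𝒜, and let (Ω_j)_{j≥1} be measurable subsets of Ω̃. Assume that for μ-a.e. x ∈ X the set {n ≥ 1 : σ^{n n₁}(x) ∈ Ω̃} is infinite; for such x define τ(x) = min{n ≥ 1 : σ^{n n₁}(x) ∈ Ω̃}, σ_Ω̃(x) = σ^{τ(x) n₁}(x), R₀(x) = 0 and R_k(x) = τ(x) + R_{k−1}(σ_Ω̃(x)) for k ≥ 1 (so R_k(x) is the index n of the k-th visit of x to Ω̃ along the times n n₁). For integers m ≥ 1, l ≥ 0 and η ∈ (0,1) set C_{m,l,η} = { x ∈ Ω̃ : #{1 ≤ j ≤ m : σ_Ω̃^j(x) ∈ Ω_{l + R_j(x)} } < η m }; for an integer L ≥ 1 and η ∈ (0,1) set A_{L,η} = { x ∈ X : #{1 ≤ j ≤ L : σ^{j n₁}(x) ∈ Ω_j} < η L } and B_{L,η} = { x ∈ X : #{1 ≤ j ≤ L : σ^{j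 n₁}(x) ∈ Ω̃} < η L }. Suppose there exist η₃, η₄ ∈ (0,1) and constants C₄, C' > 0 such that μ(B_{L,η₃}) < e^{−L η₃} for every integer L > C₄, and μ(C_{m,l,η₄}) < e^{−m η₄} for every integer l ≥ 0 and every integer m > C'. Then, setting κ₃ = min(η₃, η₃ η₄)/2, there exists C₅ > 0 such that μ(A_{L,κ₃}) < e^{−L κ₃} for every integer L > C₅. -/
/-!
A point `x` outside `B_{L,η₃}` visits `Ω̃` at least `m + 1 ≈ η₃ L` times up to time `L`. Let
`t = τ(x) ≤ L` be its first visit and `y = σ^{t n₁}(x) ∈ Ω̃`. The next `m` visits happen at the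
times `t + R_j(y) ≤ L`, and `σ_Ω̃^j(y) ∈ Ω_{t + R_j(y)}` exactly when the orbit of `x` is in
`Ω_n` at time `n = t + R_j(y)`. So if `x ∈ A_{L,κ₃}` then `y ∈ C_{m,t,η₄}`, and up to a null set
`A_{L,κ₃} ⊆ B_{L,η₃} ∪ ⋃_{1 ≤ t ≤ L} σ^{-t n₁} C_{m,t,η₄}`. Invariance of `μ` gives
`μ(A_{L,κ₃}) ≤ e^{-L η₃} + L e^{-m η₄}`, which is `< e^{-L κ₃}` for large `L` because `κ₃` is
strictly below both `η₃` and `η₃ η₄`.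
-/

open MeasureTheory Set

noncomputable section

/-- The first entry time `τ(x) = min {n ≥ 1 : σ^{n n₁}(x) ∈ Ω̃}` (junk value `0` if the orbit
never enters `Ω̃`). -/
def firstEntryTime {X : Type*} (σ : X → X) (n₁ : ℕ) (Om : Set X) (x : X) : ℕ :=
  sInf {n : ℕ | 1 ≤ n ∧ σ^[n * n₁] x ∈ Om}

/-- The first return map `σ_Ω̃(x) = σ^{τ(x) n₁}(x)` of the iterate `σ^{n₁}` to `Ω̃`. -/
def firstReturnMap {X : Type*} (σ : X → X) (n₁ : ℕ) (Om : Set X) (x : X) : X :=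
  σ^[firstEntryTime σ n₁ Om x * n₁] x

/-- The cumulative return times: `R₀(x) = 0` and `R_k(x) = τ(x) + R_{k-1}(σ_Ω̃(x))`. -/
def cumulativeReturnTime {X : Type*} (σ : X → X) (n₁ : ℕ) (Om : Set X) : ℕ → X → ℕ
  | 0, _ => 0
  | k + 1, x =>
      firstEntryTime σ n₁ Om x + cumulativeReturnTime σ n₁ Om k (firstReturnMap σ n₁ Om x)

open Filter Real

section Combinatorics

variable {X : Type*} (σ : X → X) (n₁ : ℕ) (Om : Set X)

def InfinitelyRecurrent (x : X) : Prop :=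
  {n : ℕ | 1 ≤ n ∧ σ^[n * n₁] x ∈ Om}.Infinite

-- In the paper's notation `A_{L,η} = {visitCount Ω_• L < η L}`,
-- `B_{L,η} = {visitCount (fun _ => Ω̃) L < η L}` and
-- `C_{m,l,η} = Ω̃ ∩ {returnVisitCount Ω_• l m < η m}`.
def visitCount (S : ℕ → Set X) (L : ℕ) (x : X) : ℕ :=
  Nat.card {j : ℕ | 1 ≤ j ∧ j ≤ L ∧ σ^[j * n₁] x ∈ S j}

def returnVisitCount (S : ℕ → Set X) (l m : ℕ) (y : X) : ℕ :=
  Nat.card {j : ℕ | 1 ≤ j ∧ j ≤ m ∧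
    (firstReturnMap σ n₁ Om)^[j] y ∈ S (l + cumulativeReturnTime σ n₁ Om j y)}

variable {σ n₁ Om}

lemma iterate_mul_apply_iterate_mul (n t : ℕ) (x : X) :
    σ^[n * n₁] (σ^[t * n₁] x) = σ^[(n + t) * n₁] x := by
  rw [← Function.iterate_add_apply, add_mul]

lemma iterate_firstReturnMap_eq (k : ℕ) (x : X) :
    (firstReturnMap σ n₁ Om)^[k] x = σ^[cumulativeReturnTime σ n₁ Om k x * n₁] x := by
  induction k generalizing x with
  | zero => simp [cumulativeReturnTime]
  | succ k ih =>
    rw [Function.iterate_succ_apply, ih, firstReturnMap, iterate_mul_apply_iterate_mul,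
      cumulativeReturnTime, add_comm]
    rfl

lemma cumulativeReturnTime_succ' (k : ℕ) (x : X) :
    cumulativeReturnTime σ n₁ Om (k + 1) x =
      cumulativeReturnTime σ n₁ Om k x
        + firstEntryTime σ n₁ Om ((firstReturnMap σ n₁ Om)^[k] x) := by
  induction k generalizing x with
  | zero => simp [cumulativeReturnTime]
  | succ k ih =>
    rw [cumulativeReturnTime, ih, cumulativeReturnTime, Function.iterate_succ_apply, add_assoc]

namespace InfinitelyRecurrent

variable {x : X}

lemma one_le_firstEntryTime (hx : InfinitelyRecurrent σ n₁ Om x) :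
    1 ≤ firstEntryTime σ n₁ Om x :=
  (Nat.sInf_mem hx.nonempty).1

lemma firstReturnMap_mem (hx : InfinitelyRecurrent σ n₁ Om x) :
    firstReturnMap σ n₁ Om x ∈ Om :=
  (Nat.sInf_mem hx.nonempty).2

lemma apply_firstReturnMap (hx : InfinitelyRecurrent σ n₁ Om x) :
    InfinitelyRecurrent σ n₁ Om (firstReturnMap σ n₁ Om x) := by
  set t := firstEntryTime σ n₁ Om x
  refine Set.Infinite.of_image (· + t) ((hx.sdiff (Set.finite_Iic t)).mono ?_)
  rintro n ⟨⟨-, hn⟩, hnt⟩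
  have htn : t < n := not_le.mp hnt
  refine ⟨n - t, ⟨by omega, ?_⟩, by simp only; omega⟩
  rwa [firstReturnMap, iterate_mul_apply_iterate_mul, Nat.sub_add_cancel htn.le]

lemma iterate_firstReturnMap (hx : InfinitelyRecurrent σ n₁ Om x) (k : ℕ) :
    InfinitelyRecurrent σ n₁ Om ((firstReturnMap σ n₁ Om)^[k] x) := by
  induction k with
  | zero => exact hx
  | succ k ih => rw [Function.iterate_succ_apply']; exact ih.apply_firstReturnMap

lemma strictMono_cumulativeReturnTime (hx : InfinitelyRecurrent σ n₁ Om x) :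
    StrictMono (cumulativeReturnTime σ n₁ Om · x) :=
  strictMono_nat_of_lt_succ fun k => by
    have := (hx.iterate_firstReturnMap k).one_le_firstEntryTime
    rw [cumulativeReturnTime_succ']
    omega

lemma exists_cumulativeReturnTime_eq {n : ℕ} (hx : InfinitelyRecurrent σ n₁ Om x) (hn : 1 ≤ n)
    (hmem : σ^[n * n₁] x ∈ Om) : ∃ j, 1 ≤ j ∧ cumulativeReturnTime σ n₁ Om j x = n := by
  induction n using Nat.strong_induction_on generalizing x with
  | _ n ih =>
    set t := firstEntryTime σ n₁ Om x
    have htn : t ≤ n := Nat.sInf_le ⟨hn, hmem⟩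
    obtain htn | htn := htn.eq_or_lt
    · exact ⟨1, le_rfl, htn⟩
    have hmem' : σ^[(n - t) * n₁] (firstReturnMap σ n₁ Om x) ∈ Om := by
      rwa [firstReturnMap, iterate_mul_apply_iterate_mul, Nat.sub_add_cancel htn.le]
    obtain ⟨j, -, hj⟩ := ih (n - t) (by have := hx.one_le_firstEntryTime; omega)
      hx.apply_firstReturnMap (by omega) hmem'
    exact ⟨j + 1, by omega, by rw [cumulativeReturnTime, hj]; omega⟩

lemma cumulativeReturnTime_le_of_lt_visitCount (hx : InfinitelyRecurrent σ n₁ Om x) {m L : ℕ}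
    (h : m < visitCount σ n₁ (fun _ => Om) L x) : cumulativeReturnTime σ n₁ Om (m + 1) x ≤ L := by
  by_contra! hL
  have hsub : {j : ℕ | 1 ≤ j ∧ j ≤ L ∧ σ^[j * n₁] x ∈ Om} ⊆
      (cumulativeReturnTime σ n₁ Om · x) '' Icc 1 m := by
    rintro n ⟨hn, hnL, hmem⟩
    obtain ⟨j, hj, rfl⟩ := hx.exists_cumulativeReturnTime_eq hn hmem
    refine ⟨j, ⟨hj, ?_⟩, rfl⟩
    by_contra! hjm
    have := hx.strictMono_cumulativeReturnTime.monotone (show m + 1 ≤ j by omega)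
    omega
  have : visitCount σ n₁ (fun _ => Om) L x ≤ m :=
    calc visitCount σ n₁ (fun _ => Om) L x
        ≤ ((cumulativeReturnTime σ n₁ Om · x) '' Icc 1 m).ncard :=
          Set.ncard_le_ncard hsub ((finite_Icc 1 m).image _)
      _ ≤ (Icc 1 m).ncard := ncard_image_le (finite_Icc 1 m)
      _ = m := by simp
  omega

lemma returnVisitCount_le_visitCount (S : ℕ → Set X) (hx : InfinitelyRecurrent σ n₁ Om x)
    {m L : ℕ} (hL : cumulativeReturnTime σ n₁ Om (m + 1) x ≤ L) :
    returnVisitCount σ n₁ Om S (firstEntryTime σ n₁ Om x) m (firstReturnMap σ n₁ Om x)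
      ≤ visitCount σ n₁ S L x := by
  refine Set.ncard_le_ncard_of_injOn (fun j => cumulativeReturnTime σ n₁ Om (j + 1) x) ?_
    (fun _ _ _ _ hij => Nat.succ_injective (hx.strictMono_cumulativeReturnTime.injective hij))
    ((finite_Icc 1 L).subset fun n hn => ⟨hn.1, hn.2.1⟩)
  rintro j ⟨-, hjm, hmem⟩
  refine ⟨(Nat.le_add_left 1 j).trans hx.strictMono_cumulativeReturnTime.le_apply, ?_, ?_⟩
  · exact (hx.strictMono_cumulativeReturnTime.monotone (by omega)).trans hL
  · rwa [← iterate_firstReturnMap_eq, Function.iterate_succ_apply]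

lemma exists_returnVisitCount_le_visitCount (S : ℕ → Set X) (hx : InfinitelyRecurrent σ n₁ Om x)
    {m L : ℕ} (h : m < visitCount σ n₁ (fun _ => Om) L x) :
    ∃ t ∈ Finset.Icc 1 L, (σ^[n₁])^[t] x ∈ Om ∧
      returnVisitCount σ n₁ Om S t m ((σ^[n₁])^[t] x) ≤ visitCount σ n₁ S L x := by
  have hL := hx.cumulativeReturnTime_le_of_lt_visitCount h
  have hτ : firstEntryTime σ n₁ Om x ≤ L :=
    (hx.strictMono_cumulativeReturnTime.monotone (Nat.le_add_left 1 m)).trans hL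
  have hiter : (σ^[n₁])^[firstEntryTime σ n₁ Om x] x = firstReturnMap σ n₁ Om x := by
    rw [← Function.iterate_mul, mul_comm, firstReturnMap]
  refine ⟨_, Finset.mem_Icc.2 ⟨hx.one_le_firstEntryTime, hτ⟩, ?_⟩
  rw [hiter]
  exact ⟨hx.firstReturnMap_mem, hx.returnVisitCount_le_visitCount S hL⟩

end InfinitelyRecurrent

end Combinatorics

lemma measure_setOf_visitCount_lt_le {X : Type*} [MeasurableSpace X] {μ : Measure X}
    {σ : X → X} {n₁ : ℕ} {Om : Set X} (hinv : MeasurePreserving (σ^[n₁]) μ μ)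
    (hrec : ∀ᵐ x ∂μ, InfinitelyRecurrent σ n₁ Om x) (S : ℕ → Set X) {L m : ℕ} {κ η η' : ℝ}
    (hm : (m : ℝ) < η * L) (hκ : κ * L ≤ η' * m) :
    μ {x | (visitCount σ n₁ S L x : ℝ) < κ * L} ≤
      μ {x | (visitCount σ n₁ (fun _ => Om) L x : ℝ) < η * L} +
        ∑ t ∈ Finset.Icc 1 L,
          μ {y | y ∈ Om ∧ (returnVisitCount σ n₁ Om S t m y : ℝ) < η' * m} := by
  set B := {x | (visitCount σ n₁ (fun _ => Om) L x : ℝ) < η * L}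
  set C := fun t => {y | y ∈ Om ∧ (returnVisitCount σ n₁ Om S t m y : ℝ) < η' * m}
  calc μ {x | (visitCount σ n₁ S L x : ℝ) < κ * L}
      ≤ μ (B ∪ ⋃ t ∈ Finset.Icc 1 L, (σ^[n₁])^[t] ⁻¹' C t) := by
        refine measure_mono_ae (hrec.mono fun x hx (hA : _ < _) => ?_)
        by_cases hxB : x ∈ B
        · exact Or.inl hxB
        have hvisits : m < visitCount σ n₁ (fun _ => Om) L x := by
          exact_mod_cast hm.trans_le (not_lt.mp hxB)
        obtain ⟨t, ht, hmem, hle⟩ := hx.exists_returnVisitCount_le_visitCount S hvisits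
        refine Or.inr (mem_biUnion ht ⟨hmem, ?_⟩)
        calc (returnVisitCount σ n₁ Om S t m ((σ^[n₁])^[t] x) : ℝ)
            ≤ visitCount σ n₁ S L x := by exact_mod_cast hle
          _ < κ * L := hA
          _ ≤ η' * m := hκ
    _ ≤ μ B + ∑ t ∈ Finset.Icc 1 L, μ ((σ^[n₁])^[t] ⁻¹' C t) :=
        (measure_union_le _ _).trans (by gcongr; exact measure_biUnion_finset_le _ _)
    _ ≤ μ B + ∑ t ∈ Finset.Icc 1 L, μ (C t) :=
        add_le_add_right (Finset.sum_le_sum fun t _ => (hinv.iterate t).measure_preimage_le _) _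

lemma measure_setOf_visitCount_lt_le_ofReal {X : Type*} [MeasurableSpace X] {μ : Measure X}
    {σ : X → X} {n₁ : ℕ} {Om : Set X} (hinv : MeasurePreserving (σ^[n₁]) μ μ)
    (hrec : ∀ᵐ x ∂μ, InfinitelyRecurrent σ n₁ Om x) (S : ℕ → Set X) {L m : ℕ} {κ η η' b c : ℝ}
    (hm : (m : ℝ) < η * L) (hκ : κ * L ≤ η' * m) (hb : 0 ≤ b) (hc : 0 ≤ c)
    (hB : μ {x | (visitCount σ n₁ (fun _ => Om) L x : ℝ) < η * L} ≤ ENNReal.ofReal b)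
    (hC : ∀ t, μ {y | y ∈ Om ∧ (returnVisitCount σ n₁ Om S t m y : ℝ) < η' * m} ≤
      ENNReal.ofReal c) :
    μ {x | (visitCount σ n₁ S L x : ℝ) < κ * L} ≤ ENNReal.ofReal (b + L * c) := by
  calc μ {x | (visitCount σ n₁ S L x : ℝ) < κ * L}
      ≤ ENNReal.ofReal b + ∑ t ∈ Finset.Icc 1 L, ENNReal.ofReal c :=
        (measure_setOf_visitCount_lt_le hinv hrec S hm hκ).trans
          (add_le_add hB (Finset.sum_le_sum fun t _ => hC t))
    _ = ENNReal.ofReal (b + L * c) := by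
        rw [Finset.sum_const, Nat.card_Icc, Nat.add_sub_cancel, nsmul_eq_mul,
          ENNReal.ofReal_add hb (by positivity), ENNReal.ofReal_mul (by positivity),
          ENNReal.ofReal_natCast]

lemma exists_nat_sub_one_le_lt {y : ℝ} (hy : 1 ≤ y) : ∃ m : ℕ, y - 1 ≤ m ∧ (m : ℝ) < y :=
  ⟨⌈y - 1⌉₊, Nat.le_ceil _, by linarith [Nat.ceil_lt_add_one (show 0 ≤ y - 1 by linarith)]⟩

open Topology in
lemma eventually_exp_add_mul_exp_lt {a b κ : ℝ} (c : ℝ) (ha : κ < a) (hb : κ < b) :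
    ∀ᶠ L : ℝ in atTop, exp (-L * a) + c * L * exp (-L * b) < exp (-L * κ) := by
  have hlim : Tendsto (fun L => exp (-(a - κ) * L) + c * (L * exp (-(b - κ) * L)))
      atTop (𝓝 0) := by
    simpa using (tendsto_rpow_mul_exp_neg_mul_atTop_nhds_zero 0 _ (sub_pos.2 ha)).add
      ((tendsto_rpow_mul_exp_neg_mul_atTop_nhds_zero 1 _ (sub_pos.2 hb)).const_mul c)
  filter_upwards [hlim.eventually_lt_const zero_lt_one] with L hL
  have hsplit : exp (-L * a) + c * L * exp (-L * b) =
      (exp (-(a - κ) * L) + c * (L * exp (-(b - κ) * L))) * exp (-L * κ) := by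
    simp only [add_mul, mul_assoc, ← exp_add]
    ring_nf
  rw [hsplit]
  exact mul_lt_of_lt_one_left (exp_pos _) hL

lemma exists_pos_forall_gt_of_eventually {P : ℕ → Prop} (h : ∀ᶠ L in atTop, P L) :
    ∃ C : ℝ, 0 < C ∧ ∀ L : ℕ, C < (L : ℝ) → P L := by
  obtain ⟨N, hN⟩ := eventually_atTop.1 h
  refine ⟨N + 1, by positivity, fun L hL => hN L ?_⟩
  exact_mod_cast (lt_add_one (N : ℝ)).le.trans hL.le

theorem recurrence_transfer_general
    {X : Type*} [MeasurableSpace X] (μ : Measure X)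
    (n₁ : ℕ) (σ : X → X)
    (hinv : MeasurePreserving (σ^[n₁]) μ μ)
    (Om : Set X)
    (Omj : ℕ → Set X)
    (hrec : ∀ᵐ x ∂μ, {n : ℕ | 1 ≤ n ∧ σ^[n * n₁] x ∈ Om}.Infinite)
    (η₃ η₄ C₄ C' : ℝ)
    (hη₃ : η₃ ∈ Ioo (0 : ℝ) 1) (hη₄ : η₄ ∈ Ioo (0 : ℝ) 1)
    (hB : ∀ L : ℕ, C₄ < (L : ℝ) →
      μ {x : X | (Nat.card {j : ℕ | 1 ≤ j ∧ j ≤ L ∧ σ^[j * n₁] x ∈ Om} : ℝ) < η₃ * L}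
        < ENNReal.ofReal (Real.exp (-(L : ℝ) * η₃)))
    (hC : ∀ l : ℕ, ∀ m : ℕ, C' < (m : ℝ) →
      μ {x : X | x ∈ Om ∧
            (Nat.card {j : ℕ | 1 ≤ j ∧ j ≤ m ∧
                (firstReturnMap σ n₁ Om)^[j] x ∈ Omj (l + cumulativeReturnTime σ n₁ Om j x)} : ℝ)
              < η₄ * m}
        < ENNReal.ofReal (Real.exp (-(m : ℝ) * η₄))) :
    ∃ C₅ : ℝ, 0 < C₅ ∧
      ∀ L : ℕ, C₅ < (L : ℝ) →
        μ {x : X | (Nat.card {j : ℕ | 1 ≤ j ∧ j ≤ L ∧ σ^[j * n₁] x ∈ Omj j} : ℝ)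
              < min η₃ (η₃ * η₄) / 2 * L}
          < ENNReal.ofReal (Real.exp (-(L : ℝ) * (min η₃ (η₃ * η₄) / 2))) := by
  obtain ⟨hη₃, -⟩ := hη₃
  obtain ⟨hη₄, -⟩ := hη₄
  set κ := min η₃ (η₃ * η₄) / 2 with hκ
  have hmin : 0 < min η₃ (η₃ * η₄) := lt_min hη₃ (mul_pos hη₃ hη₄)
  have hκ₃ : κ < η₃ := by linarith [min_le_left η₃ (η₃ * η₄)]
  have hκ₃₄ : κ ≤ η₃ * η₄ / 2 := by linarith [min_le_right η₃ (η₃ * η₄)]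
  apply exists_pos_forall_gt_of_eventually
  have hlarge : ∀ᶠ L : ℝ in atTop, C₄ < L ∧ C' + 1 < η₃ * L ∧ 2 < η₃ * L ∧
      exp (-L * η₃) + exp η₄ * L * exp (-L * (η₃ * η₄)) < exp (-L * κ) := by
    filter_upwards [eventually_gt_atTop C₄, eventually_gt_atTop ((C' + 1) / η₃),
      eventually_gt_atTop (2 / η₃),
      eventually_exp_add_mul_exp_lt (b := η₃ * η₄) (exp η₄) hκ₃ (by linarith [mul_pos hη₃ hη₄])]
      with L h₄ h' h₂ hexp
    exact ⟨h₄, (div_lt_iff₀' hη₃).1 h', (div_lt_iff₀' hη₃).1 h₂, hexp⟩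
  filter_upwards [tendsto_natCast_atTop_atTop.eventually hlarge] with L ⟨hL, hLC', hL₂, hexp⟩
  -- `m < η₃ L`, so off `B_{L,η₃}` there are `m + 1` visits to `Om` by time `L`,
  -- the last `m` of which are counted by `C_{m,τ}`
  obtain ⟨m, hm_ge, hm_lt⟩ := exists_nat_sub_one_le_lt (y := η₃ * L) (by linarith)
  have hκm : κ * L ≤ η₄ * m := by
    nlinarith [mul_le_mul_of_nonneg_left hm_ge hη₄.le,
      mul_le_mul_of_nonneg_right hκ₃₄ (Nat.cast_nonneg (α := ℝ) L)]
  have hexp_m : (L : ℝ) * exp (-m * η₄) ≤ exp η₄ * L * exp (-L * (η₃ * η₄)) := by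
    rw [mul_comm (exp η₄), mul_assoc, ← exp_add]
    gcongr
    nlinarith
  calc μ {x | (visitCount σ n₁ Omj L x : ℝ) < κ * L}
      ≤ ENNReal.ofReal (exp (-L * η₃) + L * exp (-m * η₄)) :=
        measure_setOf_visitCount_lt_le_ofReal hinv hrec Omj hm_lt hκm (exp_pos _).le
          (exp_pos _).le (hB L hL).le fun t => (hC t m (by linarith)).le
    _ ≤ ENNReal.ofReal (exp (-L * η₃) + exp η₄ * L * exp (-L * (η₃ * η₄))) := by gcongr
    _ < ENNReal.ofReal (exp (-L * κ)) := (ENNReal.ofReal_lt_ofReal_iff (exp_pos _)).2 hexp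

/-- (Abstract recurrence transfer, cf. Lemma on exponential recurrence.)
Given a probability space `(X, 𝒜, μ)`, `σ` measurable with `μ` invariant under `σ^{n₁}`,
a measurable set `Ω̃`, measurable subsets `Ω_j ⊆ Ω̃`, and the exponential estimates for the
sets `B_{L,η₃}` and `C_{m,l,η₄}`, one gets, with `κ₃ = min(η₃, η₃ η₄)/2`, the exponential
estimate `μ(A_{L,κ₃}) < e^{-L κ₃}` for all sufficiently large `L`. -/
theorem recurrence_transfer
    {X : Type*} [MeasurableSpace X] (μ : Measure X) [IsProbabilityMeasure μ]
    (n₁ : ℕ) (hn₁ : 1 ≤ n₁) (σ : X → X) (hσ : Measurable σ)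
    (hinv : MeasurePreserving (σ^[n₁]) μ μ)
    (Om : Set X) (hOm : MeasurableSet Om)
    (Omj : ℕ → Set X) (hOmj : ∀ j : ℕ, 1 ≤ j → MeasurableSet (Omj j) ∧ Omj j ⊆ Om)
    (hrec : ∀ᵐ x ∂μ, {n : ℕ | 1 ≤ n ∧ σ^[n * n₁] x ∈ Om}.Infinite)
    (η₃ η₄ C₄ C' : ℝ)
    (hη₃ : η₃ ∈ Ioo (0 : ℝ) 1) (hη₄ : η₄ ∈ Ioo (0 : ℝ) 1) (hC₄ : 0 < C₄) (hC' : 0 < C')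
    (hB : ∀ L : ℕ, C₄ < (L : ℝ) →
      μ {x : X | (Nat.card {j : ℕ | 1 ≤ j ∧ j ≤ L ∧ σ^[j * n₁] x ∈ Om} : ℝ) < η₃ * L}
        < ENNReal.ofReal (Real.exp (-(L : ℝ) * η₃)))
    (hC : ∀ l : ℕ, ∀ m : ℕ, C' < (m : ℝ) →
      μ {x : X | x ∈ Om ∧
            (Nat.card {j : ℕ | 1 ≤ j ∧ j ≤ m ∧
                (firstReturnMap σ n₁ Om)^[j] x ∈ Omj (l + cumulativeReturnTime σ n₁ Om j x)} : ℝ)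
              < η₄ * m}
        < ENNReal.ofReal (Real.exp (-(m : ℝ) * η₄))) :
    ∃ C₅ : ℝ, 0 < C₅ ∧
      ∀ L : ℕ, C₅ < (L : ℝ) →
        μ {x : X | (Nat.card {j : ℕ | 1 ≤ j ∧ j ≤ L ∧ σ^[j * n₁] x ∈ Omj j} : ℝ)
              < min η₃ (η₃ * η₄) / 2 * L}
          < ENNReal.ofReal (Real.exp (-(L : ℝ) * (min η₃ (η₃ * η₄) / 2))) :=
  recurrence_transfer_general μ n₁ σ hinv Om Omj hrec η₃ η₄ C₄ C' hη₃ hη₄ hB hC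
end
end
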